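/- Let p be a prime, let G be a finite p-solvable group, and let M be a non-normal maximal subgroup of G whose index |G:M| is a power of p. If the Fitting subgroup F(M/Core_G M) is trivial, then there exists a Hall p'-subgroup K of G (a subgroup of order coprime to p whose index is a power of p) such that the normalizer N_G(K) is contained in M. -/

import Mathlib

/-- `n` is a `π`-number: every prime divisor of `n` lies in `π`. -/
def IsPiNumber (π : Set ℕ) (n : ℕ) : Prop := ∀ p : ℕ, p.Prime → p ∣ n → p ∈ π

/-- A group `G` is `π`-solvable if it has a normal series each of whose factors is either a
solvable `π`-group or a `π'`-group.  The order of the factor `s (i+1) / s i` is the relative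
index `(s i.castSucc).relindex (s i.succ)`, and solvability of this factor is expressed by
the derived series of `s (i+1)` eventually landing inside `s i`. -/
def IsPiSolvable (π : Set ℕ) (G : Type*) [Group G] : Prop :=
  ∃ (n : ℕ) (s : Fin (n + 1) → Subgroup G),
    Monotone s ∧ s 0 = ⊥ ∧ s (Fin.last n) = ⊤ ∧ (∀ i, (s i).Normal) ∧
    ∀ i : Fin n,
      (IsPiNumber π ((s i.castSucc).relIndex (s i.succ)) ∧
        ∃ m, (derivedSeries (s i.succ) m).map (s i.succ).subtype ≤ s i.castSucc) ∨
      IsPiNumber πᶜ ((s i.castSucc).relIndex (s i.succ))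

/-- The Fitting subgroup of a group `X`: the subgroup generated by (for finite groups,
the largest of) all nilpotent normal subgroups of `X`. -/
def fittingSubgroup (X : Type*) [Group X] : Subgroup X :=
  sSup {N : Subgroup X | N.Normal ∧ Group.IsNilpotent N}

/-!
Pass to `Q = G / Core_G M`, in which `L = M / Core_G M` is a core-free maximal subgroup of
`p`-power index. A minimal normal subgroup `A` of `Q` is not contained in `L`, so `Q = A L` and
`|Q : L|` divides `|A|`; hence `A` is a `p`-group, so `A` is abelian and `A ∩ L` is normal in
`Q = A L`, i.e. trivial. As `F(L) = 1`, a minimal normal subgroup `W` of `L` is a `p'`-group, so it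
lies in every subgroup of `L` of `p`-power index, in particular in the image `X` of a Hall
`p'`-subgroup `K ≤ M` of `G`. Write an element of `N_Q(X)` as `b m` with `b ∈ A`, `m ∈ L`: for
`w ∈ W` the commutator `[b, w]` lies in `A ∩ L = 1`, so `b ∈ C_A(W)`. Finally `C_A(W)` is normal in
`Q = A L`; were it nontrivial it would supplement `L` and make `W` normal in `Q`, which the
core-freeness of `L` forbids. So `b = 1`, and `N_G(K) ≤ M`.
-/

namespace Subgroup

variable {G : Type*} [Group G]

theorem relIndex_dvd_relIndex_of_le {A K L : Subgroup G} (hAK : A ≤ K) (hKL : K ≤ L) :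
    A.relIndex K ∣ A.relIndex L :=
  Dvd.intro _ (relIndex_mul_relIndex A K L hAK hKL)

theorem relIndex_subgroupOf_dvd (A B H : Subgroup G) [A.Normal] (hAB : A ≤ B) :
    (A.subgroupOf H).relIndex (B.subgroupOf H) ∣ A.relIndex B := by
  rw [subgroupOf, relIndex_comap, subgroupOf_map_subtype, ← relIndex_sup_right]
  exact relIndex_dvd_relIndex_of_le le_sup_right (sup_le inf_le_left hAB)

theorem relIndex_map_map_dvd {G' : Type*} [Group G'] (f : G →* G') (A B : Subgroup G) [A.Normal]
    (hAB : A ≤ B) : (A.map f).relIndex (B.map f) ∣ A.relIndex B :=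
  calc (A.map f).relIndex (B.map f) = (A ⊔ f.ker).relIndex (B ⊔ f.ker) := relIndex_map_map f A B
    _ = (A ⊔ f.ker).relIndex B := by
      rw [← relIndex_sup_right B, ← sup_assoc, sup_of_le_left hAB]
    _ ∣ A.relIndex B := relIndex_dvd_of_le_left _ le_sup_left

theorem card_dvd_relIndex_of_inf_eq_bot {A T S : Subgroup G} [T.Normal] (hAT : A ⊓ T = ⊥)
    (hAS : A ≤ S) (hTS : T ≤ S) : Nat.card A ∣ T.relIndex S := by
  have hcard : T.relIndex (A ⊔ T) = Nat.card A := by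
    rw [relIndex_sup_right, ← inf_relIndex_right, inf_comm, hAT, relIndex_bot_left]
  exact hcard ▸ relIndex_dvd_relIndex_of_le le_sup_right (sup_le hAS hTS)

theorem relIndex_sup_eq_relIndex_inf [Finite G] (N H : Subgroup G) [N.Normal] :
    H.relIndex (N ⊔ H) = (N ⊓ H).relIndex N := by
  have h1 := relIndex_mul_relIndex (N ⊓ H) H (N ⊔ H) inf_le_right le_sup_right
  have h2 := relIndex_mul_relIndex (N ⊓ H) N (N ⊔ H) inf_le_left le_sup_left
  rw [relIndex_sup_left, ← inf_relIndex_right N H, ← h1, mul_comm] at h2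
  exact (Nat.eq_of_mul_eq_mul_left (Nat.pos_of_ne_zero index_ne_zero_of_finite) h2).symm

theorem relIndex_sup_dvd_card [Finite G] (N H : Subgroup G) [N.Normal] :
    H.relIndex (N ⊔ H) ∣ Nat.card N :=
  relIndex_sup_eq_relIndex_inf N H ▸ relIndex_dvd_card _ _

theorem le_of_coprime_card_index [Finite G] {N H : Subgroup G} [N.Normal]
    (h : (Nat.card N).Coprime H.index) : N ≤ H := by
  have hdvd : H.relIndex (N ⊔ H) ∣ Nat.gcd (Nat.card N) H.index :=
    Nat.dvd_gcd (relIndex_sup_dvd_card N H) (relIndex_dvd_index_of_le le_sup_right)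
  rw [h, Nat.dvd_one, relIndex_eq_one] at hdvd
  exact le_sup_left.trans hdvd

theorem relIndex_comap_mk' (A : Subgroup G) [A.Normal] (K : Subgroup (G ⧸ A)) :
    A.relIndex (K.comap (QuotientGroup.mk' A)) = Nat.card K := by
  have h := relIndex_ker (K := K.comap (QuotientGroup.mk' A)) (QuotientGroup.mk' A)
  rwa [QuotientGroup.ker_mk', map_comap_eq_self_of_surjective (QuotientGroup.mk'_surjective A)] at h

theorem exists_minimal_normal [Finite G] [Nontrivial G] :
    ∃ A : Subgroup G, Minimal (fun N : Subgroup G => N.Normal ∧ N ≠ ⊥) A :=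
  exists_minimal_of_wellFoundedLT _ ⟨⊤, inferInstance, top_ne_bot⟩

theorem le_centralizer_of_minimal_normal {A : Subgroup G}
    (hA : Minimal (fun N : Subgroup G => N.Normal ∧ N ≠ ⊥) A) [Group.IsNilpotent A] :
    A ≤ centralizer A := by
  have := hA.prop.1
  have : Nontrivial A := (nontrivial_iff_ne_bot A).mpr hA.prop.2
  have hZ : A ⊓ centralizer A ≠ ⊥ := by
    obtain ⟨z, hz1⟩ := ne_bot_iff_exists_ne_one.mp (Group.IsNilpotent.center_ne_bot (G := A))
    refine ne_bot_iff_exists_ne_one.mpr ⟨⟨z, mem_inf.mpr ⟨(z : A).2, fun a ha => ?_⟩⟩, ?_⟩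
    · exact congrArg Subtype.val (mem_center_iff.mp z.2 ⟨a, ha⟩)
    · intro h
      have hz : ((z : A) : G) = 1 := by simpa only [coe_one] using congrArg Subtype.val h
      exact hz1 (Subtype.ext (Subtype.ext hz))
  exact (hA.le_of_le ⟨inferInstance, hZ⟩ inf_le_left).trans inf_le_right

theorem normalizer_le_normalizer_centralizer (H : Subgroup G) :
    normalizer (H : Set G) ≤ normalizer (centralizer (H : Set G) : Set G) :=
  le_normalizer_of_normal_subgroupOf (centralizer_le_normalizer _)

section CoreFreeMaximal

variable {L A W X Y : Subgroup G}

theorem normal_of_sup_eq_top_of_le_normalizer (hAL : A ⊔ L = ⊤)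
    (hA : A ≤ normalizer (Y : Set G)) (hL : L ≤ normalizer (Y : Set G)) : Y.Normal :=
  normalizer_eq_top_iff.mp (top_le_iff.mp (hAL ▸ sup_le hA hL))

theorem eq_bot_of_le_of_normalCore_eq_bot (hcore : L.normalCore = ⊥) [Y.Normal] (hYL : Y ≤ L) :
    Y = ⊥ :=
  le_bot_iff.mp (hcore ▸ normal_le_normalCore.mpr hYL)

theorem le_normalizer_of_le_centralizer_of_le (hA : A ≤ centralizer A) (hYA : Y ≤ A) :
    A ≤ normalizer (Y : Set G) :=
  (hA.trans (centralizer_le hYA)).trans (centralizer_le_normalizer _)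

theorem inf_eq_bot_of_le_centralizer (hcore : L.normalCore = ⊥) [A.Normal]
    (hA : A ≤ centralizer A) (hAL : A ⊔ L = ⊤) : A ⊓ L = ⊥ :=
  have : (A ⊓ L).Normal := normal_of_sup_eq_top_of_le_normalizer hAL
    (le_normalizer_of_le_centralizer_of_le hA inf_le_left)
    (le_inf le_normalizer_of_normal le_normalizer |>.trans inf_normalizer_le_normalizer_inf)
  eq_bot_of_le_of_normalCore_eq_bot hcore inf_le_right

theorem mem_centralizer_of_conj_mem [A.Normal] (hAL : A ⊓ L = ⊥) (hWL : W ≤ L) {b : G}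
    (hb : b ∈ A) (hbW : ∀ w ∈ W, b⁻¹ * w * b ∈ L) : b ∈ centralizer (W : Set G) := by
  intro w hw
  have hcomm : b⁻¹ * w * b * w⁻¹ ∈ A ⊓ L := by
    refine mem_inf.mpr ⟨?_, mul_mem (hbW w hw) (inv_mem (hWL hw))⟩
    simpa only [mul_assoc] using mul_mem (inv_mem hb) (Normal.conj_mem inferInstance b hb w)
  rwa [hAL, mem_bot, mul_inv_eq_one, mul_assoc, inv_mul_eq_iff_eq_mul] at hcomm

theorem inf_centralizer_eq_bot (hL : IsCoatom L) (hcore : L.normalCore = ⊥) [A.Normal]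
    (hA : A ≤ centralizer A) (hAL : A ⊔ L = ⊤) (hW : W ≠ ⊥) (hWL : W ≤ L)
    (hLW : L ≤ normalizer (W : Set G)) : A ⊓ centralizer (W : Set G) = ⊥ := by
  set E := A ⊓ centralizer (W : Set G)
  have : E.Normal := normal_of_sup_eq_top_of_le_normalizer hAL
    (le_normalizer_of_le_centralizer_of_le hA inf_le_left)
    ((le_inf le_normalizer_of_normal (hLW.trans (normalizer_le_normalizer_centralizer W))).trans
      inf_normalizer_le_normalizer_inf)
  rcases hL.le_iff.mp (le_sup_right : L ≤ E ⊔ L) with hEL | hEL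
  · have : W.Normal := normal_of_sup_eq_top_of_le_normalizer hEL
      (inf_le_right.trans (centralizer_le_normalizer _)) hLW
    exact absurd (eq_bot_of_le_of_normalCore_eq_bot hcore hWL) hW
  · exact le_bot_iff.mp (inf_eq_bot_of_le_centralizer hcore hA hAL ▸
      le_inf inf_le_left (sup_eq_right.mp hEL))

theorem normalizer_le_of_normalCore_eq_bot (hL : IsCoatom L) (hcore : L.normalCore = ⊥)
    [A.Normal] (hA : A ≤ centralizer A) (hAL : A ⊔ L = ⊤) (hW : W ≠ ⊥) (hWX : W ≤ X)
    (hXL : X ≤ L) (hLW : L ≤ normalizer (W : Set G)) : normalizer (X : Set G) ≤ L := by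
  intro g hg
  obtain ⟨b, hb, m, hm, rfl⟩ := mem_sup_of_normal_left.mp (hAL ▸ mem_top g : g ∈ A ⊔ L)
  have hbW : ∀ w ∈ W, b⁻¹ * w * b ∈ L := fun w hw => by
    have hgw : (b * m)⁻¹ * w * (b * m) ∈ L := hXL ((mem_normalizer_iff''.mp hg _).mp (hWX hw))
    convert mul_mem (mul_mem hm hgw) (inv_mem hm) using 1
    group
  have hb1 : b ∈ A ⊓ centralizer (W : Set G) :=
    ⟨hb, mem_centralizer_of_conj_mem (inf_eq_bot_of_le_centralizer hcore hA hAL) (hWX.trans hXL)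
      hb hbW⟩
  rw [inf_centralizer_eq_bot hL hcore hA hAL hW (hWX.trans hXL) hLW, mem_bot] at hb1
  rwa [hb1, one_mul]

end CoreFreeMaximal

theorem isCoatom_map_of_surjective {G' : Type*} [Group G'] {f : G →* G'}
    (hf : Function.Surjective f) {M : Subgroup G} (hker : f.ker ≤ M) (hM : IsCoatom M) :
    IsCoatom (M.map f) := by
  refine ⟨fun h => hM.1 ?_, fun K hK => ?_⟩
  · rw [← comap_map_eq_self hker, h, comap_top]
  · rw [← comap_lt_comap_of_surjective hf, comap_map_eq_self hker] at hK
    rw [← map_comap_eq_self_of_surjective hf K, hM.2 _ hK, map_top_of_surjective f hf]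

theorem normalCore_map_mk'_normalCore (M : Subgroup G) :
    (M.map (QuotientGroup.mk' M.normalCore)).normalCore = ⊥ := by
  set π := QuotientGroup.mk' M.normalCore
  have hπ : π.ker ≤ M := (QuotientGroup.ker_mk' _).trans_le M.normalCore_le
  have hcomap : (M.map π).normalCore.comap π ≤ π.ker := by
    rw [QuotientGroup.ker_mk', normal_le_normalCore]
    exact (comap_mono (M.map π).normalCore_le).trans (comap_map_eq_self hπ).le
  rw [← map_comap_eq_self_of_surjective (QuotientGroup.mk'_surjective _) (M.map π).normalCore]
  exact (map_eq_bot_iff _).mpr hcomap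

/-- A Hall `p'`-subgroup. -/
def IsPComplement (p : ℕ) (K : Subgroup G) : Prop :=
  ¬ p ∣ Nat.card K ∧ ∃ a : ℕ, K.index = p ^ a

theorem IsPComplement.map_subtype {p : ℕ} {H : Subgroup G} {K : Subgroup H}
    (hK : K.IsPComplement p) (hH : ∃ b : ℕ, H.index = p ^ b) :
    (K.map H.subtype).IsPComplement p := by
  obtain ⟨hKp, a, hKa⟩ := hK
  obtain ⟨b, hHb⟩ := hH
  exact ⟨card_subtype H K ▸ hKp, a + b, by rw [index_map_subtype, hKa, hHb, pow_add]⟩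

theorem exists_isPComplement_of_normal {p : ℕ} (hp : p.Prime) {N : Subgroup G} [N.Normal]
    (hN : ∃ k : ℕ, Nat.card N = p ^ k) (hNi : ¬ p ∣ N.index) :
    ∃ K : Subgroup G, K.IsPComplement p := by
  obtain ⟨k, hNk⟩ := hN
  obtain ⟨K, hK⟩ := exists_right_complement'_of_coprime
    (hNk ▸ ((hp.coprime_iff_not_dvd.mpr hNi).pow_left k))
  exact ⟨K, hK.symm.index_eq_card ▸ hNi, k, hK.index_eq_card.trans hNk⟩

end Subgroup

theorem le_fittingSubgroup {X : Type*} [Group X] {N : Subgroup X} (hN : N.Normal)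
    (hnil : Group.IsNilpotent N) : N ≤ fittingSubgroup X :=
  le_sSup ⟨hN, hnil⟩

theorem fittingSubgroup_le_map {X Y : Type*} [Group X] [Group Y] (e : X ≃* Y) :
    fittingSubgroup Y ≤ (fittingSubgroup X).map (e : X →* Y) := by
  refine sSup_le fun N ⟨hN, hnil⟩ => ?_
  have : Group.IsNilpotent (N.map (e.symm : Y →* X)) :=
    Group.nilpotent_of_mulEquiv (e.symm.subgroupMap N)
  have hmap : (N.map (e.symm : Y →* X)).map (e : X →* Y) = N :=
    (Subgroup.map_symm_eq_iff_map_eq _).mp rfl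
  rw [← hmap]
  exact Subgroup.map_mono (le_fittingSubgroup (hN.map _ e.symm.surjective) this)

theorem fittingSubgroup_map_mk'_eq_bot {G : Type*} [Group G] {N M : Subgroup G} [N.Normal]
    (hF : fittingSubgroup (M ⧸ N.subgroupOf M) = ⊥) :
    fittingSubgroup (M.map (QuotientGroup.mk' N)) = ⊥ := by
  set π := QuotientGroup.mk' N
  have hker : N.subgroupOf M = (π.subgroupMap M).ker := by
    rw [Subgroup.ker_subgroupMap, QuotientGroup.ker_mk']
  have e := (QuotientGroup.quotientMulEquivOfEq hker).trans
    (QuotientGroup.quotientKerEquivOfSurjective _ (π.subgroupMap_surjective M))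
  exact le_bot_iff.mp ((fittingSubgroup_le_map e).trans (by rw [hF, Subgroup.map_bot]))

theorem IsPiNumber.of_dvd {π : Set ℕ} {m n : ℕ} (h : IsPiNumber π n) (hmn : m ∣ n) :
    IsPiNumber π m :=
  fun q hq hqm => h q hq (hqm.trans hmn)

theorem isPiNumber_compl_singleton_iff {p n : ℕ} (hp : p.Prime) :
    IsPiNumber {p}ᶜ n ↔ ¬ p ∣ n :=
  ⟨fun h hpn => h p hp hpn rfl, fun h _ _ hqn hqp => h (Set.mem_singleton_iff.mp hqp ▸ hqn)⟩

theorem IsPiNumber.exists_eq_pow {p n : ℕ} (h : IsPiNumber {p} n) (hn : n ≠ 0) :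
    ∃ k : ℕ, n = p ^ k :=
  ⟨_, Nat.eq_prime_pow_of_unique_prime_dvd hn fun hq hqn => h _ hq hqn⟩

theorem IsPiNumber.isPGroup {p : ℕ} [Fact p.Prime] {H : Type*} [Group H] [Finite H]
    (h : IsPiNumber {p} (Nat.card H)) : IsPGroup p H :=
  IsPGroup.of_card (h.exists_eq_pow Nat.card_pos.ne').choose_spec

namespace IsPiSolvable

open Subgroup

variable {π : Set ℕ} {p : ℕ} {G : Type*} [Group G]

theorem subgroup (hG : IsPiSolvable π G) (H : Subgroup G) : IsPiSolvable π H := by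
  obtain ⟨n, s, hmono, hbot, htop, hnorm, hfac⟩ := hG
  refine ⟨n, fun i => (s i).subgroupOf H, fun i j hij => comap_mono (hmono hij),
    by simp only [hbot, bot_subgroupOf], by simp only [htop, top_subgroupOf],
    fun i => normal_subgroupOf, fun i => ?_⟩
  have hdvd := relIndex_subgroupOf_dvd (s i.castSucc) (s i.succ) H
    (hmono (Fin.castSucc_le_succ i))
  refine (hfac i).imp (fun ⟨hpi, m, hsol⟩ => ⟨hpi.of_dvd hdvd, m, ?_⟩) (·.of_dvd hdvd)
  set B := s i.succ
  set j : B.subgroupOf H →* B :=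
    MonoidHom.codRestrict (H.subtype.comp (B.subgroupOf H).subtype) B fun z => z.2
  have hj : H.subtype.comp (B.subgroupOf H).subtype = B.subtype.comp j := rfl
  change _ ≤ (s i.castSucc).comap H.subtype
  rw [← map_le_iff_le_comap, map_map, hj, ← map_map]
  exact (map_mono (map_derivedSeries_le_derivedSeries j m)).trans hsol

theorem of_surjective {G' : Type*} [Group G'] (hG : IsPiSolvable π G) (f : G →* G')
    (hf : Function.Surjective f) : IsPiSolvable π G' := by
  obtain ⟨n, s, hmono, hbot, htop, hnorm, hfac⟩ := hG
  refine ⟨n, fun i => (s i).map f, fun i j hij => map_mono (hmono hij),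
    by simp only [hbot, Subgroup.map_bot], by simp only [htop, map_top_of_surjective f hf],
    fun i => (hnorm i).map f hf, fun i => ?_⟩
  have hdvd := relIndex_map_map_dvd f (s i.castSucc) (s i.succ) (hmono (Fin.castSucc_le_succ i))
  refine (hfac i).imp (fun ⟨hpi, m, hsol⟩ => ⟨hpi.of_dvd hdvd, m, ?_⟩) (·.of_dvd hdvd)
  set B := s i.succ
  have hB : (B.map f).subtype.comp (f.subgroupMap B) = f.comp B.subtype := rfl
  rw [← map_derivedSeries_eq (f.subgroupMap_surjective B), map_map, hB, ← map_map]
  exact map_mono hsol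

theorem isPiNumber_card_of_minimal (hG : IsPiSolvable π G) {A : Subgroup G}
    (hA : Minimal (fun N : Subgroup G => N.Normal ∧ N ≠ ⊥) A) :
    IsPiNumber π (Nat.card A) ∨ IsPiNumber πᶜ (Nat.card A) := by
  obtain ⟨n, s, hmono, hbot, htop, hnorm, hfac⟩ := hG
  have : A.Normal := hA.prop.1
  obtain ⟨i, hAT, hAS⟩ : ∃ i : Fin n, A ⊓ s i.castSucc = ⊥ ∧ A ⊓ s i.succ ≠ ⊥ := by
    by_contra! h
    have hall (j : Fin (n + 1)) : A ⊓ s j = ⊥ := by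
      induction j using Fin.induction with
      | zero => rw [hbot, inf_bot_eq]
      | succ i ih => exact h i ih
    exact hA.prop.2 (by simpa only [htop, inf_top_eq] using hall (Fin.last n))
  have : (s i.castSucc).Normal := hnorm _
  have hAS' : A ≤ s i.succ := (hA.le_of_le ⟨inferInstance, hAS⟩ inf_le_left).trans inf_le_right
  have hdvd := card_dvd_relIndex_of_inf_eq_bot hAT hAS' (hmono (Fin.castSucc_le_succ i))
  exact (hfac i).imp (·.1.of_dvd hdvd) (·.of_dvd hdvd)

/-- Induction through a minimal normal subgroup `A`: the preimage of a Hall `p'`-subgroup of `G/A`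
is one of `G` if `A` is a `p'`-group, and otherwise contains one as a Schur–Zassenhaus complement
of `A`. -/
theorem exists_isPComplement (hp : p.Prime) [Finite G] (hG : IsPiSolvable {p} G) :
    ∃ K : Subgroup G, K.IsPComplement p := by
  induction hn : Nat.card G using Nat.strong_induction_on generalizing G with
  | _ n ih =>
  rcases subsingleton_or_nontrivial G with hG1 | hG1
  · refine ⟨⊤, ?_, 0, by rw [index_top, pow_zero]⟩
    rw [card_top, Nat.card_unique]
    exact hp.not_dvd_one
  obtain ⟨A, hA⟩ := exists_minimal_normal (G := G)
  have : A.Normal := hA.prop.1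
  have hcard : Nat.card (G ⧸ A) < n := by
    rw [← hn, card_eq_card_quotient_mul_card_subgroup A]
    exact (Nat.lt_mul_iff_one_lt_right Nat.card_pos).mpr ((one_lt_card_iff_ne_bot A).mpr hA.prop.2)
  obtain ⟨Kb, hKbp, a, hKba⟩ := ih _ hcard
    (hG.of_surjective _ (QuotientGroup.mk'_surjective A)) rfl
  set H := Kb.comap (QuotientGroup.mk' A)
  have hAH : A ≤ H := by
    simpa only [QuotientGroup.ker_mk'] using Kb.ker_le_comap (QuotientGroup.mk' A)
  have hH : ∃ a : ℕ, H.index = p ^ a :=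
    ⟨a, by rw [index_comap_of_surjective _ (QuotientGroup.mk'_surjective A), hKba]⟩
  have hAHi : (A.subgroupOf H).index = Nat.card Kb := relIndex_comap_mk' A Kb
  have hAHc : Nat.card (A.subgroupOf H) = Nat.card A :=
    Nat.card_congr (subgroupOfEquivOfLe hAH).toEquiv
  rcases hG.isPiNumber_card_of_minimal hA with hAp | hAp
  · obtain ⟨K, hK⟩ := exists_isPComplement_of_normal hp (N := A.subgroupOf H)
      (hAHc ▸ hAp.exists_eq_pow Nat.card_pos.ne') (hAHi ▸ hKbp)
    exact ⟨_, hK.map_subtype hH⟩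
  · refine ⟨H, ?_, hH⟩
    rw [← card_mul_index (A.subgroupOf H), hAHc, hAHi, hp.dvd_mul, not_or]
    exact ⟨(isPiNumber_compl_singleton_iff hp).mp hAp, hKbp⟩

theorem exists_normal_le_centralizer_sup_eq_top (hp : p.Prime) [Finite G]
    (hG : IsPiSolvable {p} G) {L : Subgroup G} (hL : IsCoatom L) (hcore : L.normalCore = ⊥)
    (hLi : ∃ α : ℕ, L.index = p ^ α) :
    ∃ A : Subgroup G, A.Normal ∧ A ≤ centralizer A ∧ A ⊔ L = ⊤ := by
  have : Nontrivial G := by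
    rcases subsingleton_or_nontrivial G with hG1 | hG1
    · exact absurd (Subsingleton.elim L ⊤) hL.1
    · exact hG1
  obtain ⟨A, hA⟩ := exists_minimal_normal (G := G)
  have : A.Normal := hA.prop.1
  have hAL : A ⊔ L = ⊤ := (hL.le_iff.mp le_sup_right).resolve_right fun h =>
    hA.prop.2 (eq_bot_of_le_of_normalCore_eq_bot hcore (sup_eq_right.mp h))
  obtain ⟨α, hα⟩ := hLi
  have hpA : p ∣ Nat.card A := by
    have hLA : L.index ∣ Nat.card A := by
      simpa only [hAL, relIndex_top_right] using relIndex_sup_dvd_card A L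
    have hα0 : α ≠ 0 := by
      rintro rfl
      exact hL.1 (index_eq_one.mp (hα.trans (pow_zero p)))
    exact (dvd_pow_self p hα0).trans (hα ▸ hLA)
  have hAp : IsPiNumber {p} (Nat.card A) :=
    (hG.isPiNumber_card_of_minimal hA).resolve_right fun h =>
      (isPiNumber_compl_singleton_iff hp).mp h hpA
  have : Fact p.Prime := ⟨hp⟩
  have : Group.IsNilpotent A := hAp.isPGroup.isNilpotent
  exact ⟨A, inferInstance, le_centralizer_of_minimal_normal hA, hAL⟩

theorem exists_normal_ne_bot_not_dvd_card (hp : p.Prime) [Finite G] [Nontrivial G]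
    (hG : IsPiSolvable {p} G) (hF : fittingSubgroup G = ⊥) :
    ∃ N : Subgroup G, N.Normal ∧ N ≠ ⊥ ∧ ¬ p ∣ Nat.card N := by
  obtain ⟨N, hN⟩ := exists_minimal_normal (G := G)
  refine ⟨N, hN.prop.1, hN.prop.2, (isPiNumber_compl_singleton_iff hp).mp ?_⟩
  refine (hG.isPiNumber_card_of_minimal hN).resolve_left fun hNp => hN.prop.2 ?_
  have : Fact p.Prime := ⟨hp⟩
  exact le_bot_iff.mp (hF ▸ le_fittingSubgroup hN.prop.1 hNp.isPGroup.isNilpotent)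

theorem normalizer_le_of_isCoatom (hp : p.Prime) [Finite G] (hG : IsPiSolvable {p} G)
    {L X : Subgroup G} (hL : IsCoatom L) (hcore : L.normalCore = ⊥)
    (hLi : ∃ α : ℕ, L.index = p ^ α) (hF : fittingSubgroup L = ⊥) (hL1 : L ≠ ⊥) (hXL : X ≤ L)
    (hXi : ∃ β : ℕ, X.index = p ^ β) : normalizer (X : Set G) ≤ L := by
  obtain ⟨A, _, hA, hAL⟩ := hG.exists_normal_le_centralizer_sup_eq_top hp hL hcore hLi
  have : Nontrivial L := (nontrivial_iff_ne_bot L).mpr hL1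
  obtain ⟨W, _, hW1, hWp⟩ := (hG.subgroup L).exists_normal_ne_bot_not_dvd_card hp hF
  obtain ⟨β, hβ⟩ := hXi
  have hWX : W ≤ X.subgroupOf L := by
    refine le_of_coprime_card_index (Nat.Coprime.coprime_dvd_right ?_
      ((hp.coprime_iff_not_dvd.mpr hWp).symm.pow_right β))
    exact hβ ▸ relIndex_dvd_index_of_le hXL
  have hWL : (W.map L.subtype).subgroupOf L = W :=
    comap_map_eq_self_of_injective L.subtype_injective W
  have : ((W.map L.subtype).subgroupOf L).Normal := by rw [hWL]; infer_instance
  exact normalizer_le_of_normalCore_eq_bot hL hcore hA hAL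
    ((map_eq_bot_iff_of_injective W L.subtype_injective).not.mpr hW1)
    (map_le_iff_le_comap.mpr hWX) hXL (le_normalizer_of_normal_subgroupOf (map_subtype_le W))

end IsPiSolvable

/-- **Theorem 2(2).** Let `G` be a finite `p`-solvable group and `M` a non-normal maximal
subgroup of `G` with `|G : M| = p^α`.  If `F(M / Core_G M) = 1`, then `N_G(K) ≤ M` for some
Hall `p'`-subgroup `K` of `G` (a subgroup of order not divisible by `p` whose index is a
power of `p`). -/
theorem normalizer_hall_le_of_pSolvable_maximal_not_normal
    {G : Type*} [Group G] [Finite G] (p : ℕ) (hp : p.Prime)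
    (hG : IsPiSolvable {p} G)
    (M : Subgroup G) (hmax : IsCoatom M) (hnn : ¬ M.Normal)
    (hidx : ∃ α : ℕ, M.index = p ^ α)
    (hF : fittingSubgroup (M ⧸ M.normalCore.subgroupOf M) = ⊥) :
    ∃ K : Subgroup G, ¬ p ∣ Nat.card K ∧ (∃ a : ℕ, K.index = p ^ a) ∧
      Subgroup.normalizer (K : Set G) ≤ M := by
  obtain ⟨K, hK⟩ := (hG.subgroup M).exists_isPComplement hp
  obtain ⟨hKp, a, hKa⟩ := hK.map_subtype hidx
  set π := QuotientGroup.mk' M.normalCore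
  have hπ : Function.Surjective π := QuotientGroup.mk'_surjective _
  have hker : π.ker ≤ M := (QuotientGroup.ker_mk' _).trans_le M.normalCore_le
  have hL1 : M.map π ≠ ⊥ := fun h => hnn <| by
    rw [le_antisymm (((Subgroup.map_eq_bot_iff _).mp h).trans (QuotientGroup.ker_mk' _).le)
      M.normalCore_le]
    exact M.normalCore_normal
  have hLi : ∃ α : ℕ, (M.map π).index = p ^ α := by
    rwa [M.index_map_eq hπ hker]
  have hXi : ∃ β : ℕ, ((K.map M.subtype).map π).index = p ^ β := by
    obtain ⟨β, -, hβ⟩ := (Nat.dvd_prime_pow hp).mp (hKa ▸ Subgroup.index_map_dvd _ hπ)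
    exact ⟨β, hβ⟩
  refine ⟨K.map M.subtype, hKp, ⟨a, hKa⟩, fun g hg => ?_⟩
  rw [← Subgroup.comap_map_eq_self hker]
  exact (hG.of_surjective π hπ).normalizer_le_of_isCoatom hp
    (Subgroup.isCoatom_map_of_surjective hπ hker hmax) M.normalCore_map_mk'_normalCore hLi
    (fittingSubgroup_map_mk'_eq_bot hF) hL1 (Subgroup.map_mono (Subgroup.map_subtype_le K)) hXi
    (Subgroup.le_normalizer_map π ⟨g, hg, rfl⟩)
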